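/- Let N, m ≥ 1, c, d ∈ ℤ, p prime, and suppose [[a, b],[Nc, p^m d]] ∈ SL₂(ℤ). Let W = [[a p^m, b],[N p^m c, p^m d]]. If x ∈ ℙ¹(ℚ) satisfies W·x ∈ Γ₀(N)·∞, then x ∈ Γ₀(N)·∞; that is, the Atkin–Lehner matrix W preserves the set C = ℙ¹(ℚ) − Γ₀(N)·∞. -/

import Mathlib

open Matrix CongruenceSubgroup

abbrev SL2Z := Matrix.SpecialLinearGroup (Fin 2) ℤ
abbrev P1 := Projectivization ℚ (Fin 2 → ℚ)

noncomputable def glAct (g : GL (Fin 2) ℚ) (x : P1) : P1 :=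
  Projectivization.map
    ((Matrix.toLinearEquiv' (g : Matrix (Fin 2) (Fin 2) ℚ) g.invertible).toLinearMap)
    (LinearEquiv.injective _) x

noncomputable def slAct (g : SL2Z) : P1 → P1 :=
  glAct (Matrix.SpecialLinearGroup.toGL
    (Matrix.SpecialLinearGroup.map (Int.castRingHom ℚ) g))

noncomputable def inf : P1 := Projectivization.mk ℚ ![1, 0] (by intro h; simpa using congrFun h 0)

noncomputable def ratPt (q : ℚ) : P1 :=
  Projectivization.mk ℚ ![q, 1] (by intro h; simpa using congrFun h 1)

def orbitInf (N : ℕ) : Set P1 := {x | ∃ γ ∈ Gamma0 N, slAct γ inf = x}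

/-!
Write `x = [u : v]` with `u, v` coprime. An integral point `[A : C]` of `Γ₀(N)·∞` equals
`[γ₀₀ : γ₁₀]` for some `γ ∈ Γ₀(N)`, and `γ₀₀` is a unit mod `N`, so `A γ₁₀ = γ₀₀ C` forces
`N ∣ C`. For `W (u, v)` this gives `N ∣ p^m (N c u + d v)`, and `p^m d` is prime to `N` by the
determinant condition, so `N ∣ v`; a coprime column `(u, v)` with `N ∣ v` is the first column of
an element of `Γ₀(N)`.
-/

lemma glAct_mk (g : GL (Fin 2) ℚ) (v : Fin 2 → ℚ) (hv : v ≠ 0) :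
    glAct g (Projectivization.mk ℚ v hv) =
      Projectivization.mk ℚ ((g : Matrix (Fin 2) (Fin 2) ℚ) *ᵥ v)
        ((Matrix.toLinearEquiv' _ g.invertible).map_ne_zero_iff.mpr hv) :=
  rfl

lemma intVec_ne_zero {u v : ℤ} (h : u ≠ 0 ∨ v ≠ 0) : (![(u : ℚ), (v : ℚ)] : Fin 2 → ℚ) ≠ 0 := by
  intro h0
  have h0u : (u : ℚ) = 0 := by simpa using congrFun h0 0
  have h0v : (v : ℚ) = 0 := by simpa using congrFun h0 1
  norm_cast at h0u h0v
  tauto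

lemma exists_intVec_eq_mk (x : P1) :
    ∃ (u v : ℤ) (h : u ≠ 0 ∨ v ≠ 0),
      x = Projectivization.mk ℚ ![(u : ℚ), (v : ℚ)] (intVec_ne_zero h) := by
  induction x using Projectivization.ind with
  | h w hw =>
  refine ⟨(w 0).num * (w 1).den, (w 1).num * (w 0).den, ?_, ?_⟩
  · by_contra! h0
    apply hw
    ext i; fin_cases i <;> simp_all [Rat.num_eq_zero]
  · refine ((Projectivization.mk_eq_mk_iff' ℚ _ _ _ _).mpr ⟨(w 0).den * (w 1).den, ?_⟩).symm
    ext i; fin_cases i <;> simp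
    · linear_combination ((w 1).den : ℚ) * Rat.den_mul_eq_num (w 0)
    · linear_combination ((w 0).den : ℚ) * Rat.den_mul_eq_num (w 1)

lemma exists_coprime_eq_mk (x : P1) :
    ∃ (u v : ℤ) (h : IsCoprime u v),
      x = Projectivization.mk ℚ ![(u : ℚ), (v : ℚ)] (intVec_ne_zero h.ne_zero_or_ne_zero) := by
  obtain ⟨A, C, hAC, rfl⟩ := exists_intVec_eq_mk x
  obtain ⟨g, u, v, -, huv, rfl, rfl⟩ := Int.exists_gcd_one' (Int.gcd_pos_iff.mpr hAC)
  have huv : IsCoprime u v := Int.isCoprime_iff_gcd_eq_one.mpr huv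
  refine ⟨u, v, huv, (Projectivization.mk_eq_mk_iff' ℚ _ _ _ _).mpr ⟨g, ?_⟩⟩
  ext i; fin_cases i <;> simp [mul_comm]

lemma slAct_inf (γ : SL2Z) :
    slAct γ inf = Projectivization.mk ℚ ![((γ 0 0 : ℤ) : ℚ), ((γ 1 0 : ℤ) : ℚ)]
      (intVec_ne_zero (γ.isCoprime_col 0).ne_zero_or_ne_zero) := by
  rw [slAct, inf, glAct_mk]
  refine (Projectivization.mk_eq_mk_iff' ℚ _ _ _ _).mpr ⟨1, ?_⟩
  ext i; fin_cases i <;> simp [Matrix.mulVec, dotProduct, Fin.sum_univ_two]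

lemma dvd_of_mem_Gamma0 {N : ℕ} {γ : SL2Z} (hγ : γ ∈ Gamma0 N) : (N : ℤ) ∣ γ 1 0 :=
  (ZMod.intCast_zmod_eq_zero_iff_dvd _ N).mp (Gamma0_mem.mp hγ)

lemma isCoprime_of_mem_Gamma0 {N : ℕ} {γ : SL2Z} (hγ : γ ∈ Gamma0 N) :
    IsCoprime (N : ℤ) (γ 0 0) := by
  obtain ⟨k, hk⟩ := dvd_of_mem_Gamma0 hγ
  have hdet := γ.det_coe
  rw [Matrix.det_fin_two] at hdet
  exact ⟨-(γ 0 1 * k), γ 1 1, by rw [hk] at hdet; linear_combination hdet⟩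

lemma dvd_of_mk_mem_orbitInf {N : ℕ} {A C : ℤ} {w : Fin 2 → ℚ} (hw : w ≠ 0)
    (hwAC : w = ![(A : ℚ), (C : ℚ)]) (h : Projectivization.mk ℚ w hw ∈ orbitInf N) :
    (N : ℤ) ∣ C := by
  obtain ⟨γ, hγ, hγw⟩ := h
  rw [slAct_inf, Projectivization.mk_eq_mk_iff'] at hγw
  obtain ⟨s, hs⟩ := hγw
  subst hwAC
  have hs0 : s * A = γ 0 0 := by simpa using congrFun hs 0
  have hs1 : s * C = γ 1 0 := by simpa using congrFun hs 1
  have hcross : A * γ 1 0 = γ 0 0 * C := by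
    have : (A : ℚ) * γ 1 0 = γ 0 0 * C := by rw [← hs0, ← hs1]; ring
    exact_mod_cast this
  exact (isCoprime_of_mem_Gamma0 hγ).dvd_of_dvd_mul_left
    (hcross ▸ (dvd_of_mem_Gamma0 hγ).mul_left A)

lemma mk_mem_orbitInf {N : ℕ} {u v : ℤ} (huv : IsCoprime u v) (hv : (N : ℤ) ∣ v) :
    Projectivization.mk ℚ ![(u : ℚ), (v : ℚ)] (intVec_ne_zero huv.ne_zero_or_ne_zero) ∈
      orbitInf N := by
  obtain ⟨z, w, hzw⟩ := huv
  let γ : SL2Z := ⟨!![u, -w; v, z], by rw [Matrix.det_fin_two_of]; linear_combination hzw⟩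
  refine ⟨γ, Gamma0_mem.mpr ((ZMod.intCast_zmod_eq_zero_iff_dvd _ N).mpr hv), ?_⟩
  rw [slAct_inf, Projectivization.mk_eq_mk_iff' ℚ _ _ _ _]
  exact ⟨1, by simp [γ]⟩

/-- the Atkin–Lehner matrix W = [[a p^m, b],[N p^m c, p^m d]], built from
[[a,b],[Nc,p^m d]] ∈ SL₂(ℤ), preserves C = ℙ¹(ℚ) − Γ₀(N)·∞. -/
theorem stmt4 (N m : ℕ) (p : ℕ) (hp : p.Prime)
    (a b c d : ℤ)
    (hdet : (!![a, b; (N : ℤ) * c, (p : ℤ) ^ m * d]).det = 1) (x : P1)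
    (h : glAct (Matrix.GeneralLinearGroup.mkOfDetNeZero
        !![(a : ℚ) * (p : ℚ) ^ m, (b : ℚ); (N : ℚ) * (p : ℚ) ^ m * (c : ℚ), (p : ℚ) ^ m * (d : ℚ)]
        (by
          rw [Matrix.det_fin_two_of] at hdet ⊢
          have hp0 : ((p : ℚ)) ^ m ≠ 0 :=
            pow_ne_zero _ ((Nat.cast_ne_zero (R := ℚ)).mpr hp.ne_zero)
          have key : (a : ℚ) * (p : ℚ) ^ m * ((p : ℚ) ^ m * (d : ℚ))
              - (b : ℚ) * ((N : ℚ) * (p : ℚ) ^ m * (c : ℚ)) = (p : ℚ) ^ m := by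
            have hd : ((a * ((p : ℤ) ^ m * d) - b * ((N : ℤ) * c) : ℤ) : ℚ) = 1 := by
              exact_mod_cast hdet
            push_cast at hd
            linear_combination (p : ℚ) ^ m * hd
          rw [key]
          exact hp0)) x ∈ orbitInf N) :
    x ∈ orbitInf N := by
  obtain ⟨u, v, huv, rfl⟩ := exists_coprime_eq_mk x
  rw [glAct_mk] at h
  have hNC : (N : ℤ) ∣ N * (p ^ m * c * u) + p ^ m * d * v :=
    dvd_of_mk_mem_orbitInf (A := a * p ^ m * u + b * v) _
      (by ext i; fin_cases i <;> simp [Matrix.mulVec, dotProduct]; ring) h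
  have hcop : IsCoprime (N : ℤ) (p ^ m * d) := by
    rw [Matrix.det_fin_two_of] at hdet
    exact ⟨-(b * c), a, by linear_combination hdet⟩
  exact mk_mem_orbitInf huv
    (hcop.dvd_of_dvd_mul_left ((dvd_add_right (dvd_mul_right _ _)).mp hNC))
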